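/- arXiv:1112.2327 — 7 statements merged into one kernel-verified Lean document; each statement's English description precedes it below -/
import Mathlib

section
/- For real $a$ and $\beta, m, \omega > 0$, the functions $p(t) = \frac{1}{\sqrt{\beta}}\arctan\left(\frac{\eta}{\sqrt{1+(1+\eta^2)\cot^2(\sqrt{1+\eta^2}\,\omega t)}}\right)$ and $x(t) = -\frac{a\sqrt{1+\eta^2}\cot(\sqrt{1+\eta^2}\,\omega t)}{\sqrt{1+(1+\eta^2)\cot^2(\sqrt{1+\eta^2}\,\omega t)}}$, with $\eta = \sqrt{\beta} m \omega a$, satisfy the Hamilton equations $\dot x = \tan(\sqrt{\beta} p)\sec^2(\sqrt{\beta} p)/(\sqrt{\beta} m)$ and $\dot p = -m\omega^2 x$ on any interval where $\sin(\sqrt{1+\eta^2}\,\omega t) \ne 0$. -/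
/-!
Put `K = √(1 + η²)`, `c = cot (K ω t)` and `d = √(1 + K² c²)`. Then `ċ = -K ω (1 + c²)`,
`x = -a K c / d` and `√β p = arctan (η / d)`, and after the chain rule both Hamilton equations
reduce to the identity `d² + η² = K² (1 + c²)`.
-/

noncomputable def gupCot (u : ℝ) : ℝ := Real.cos u / Real.sin u

open Real

theorem hasDerivAt_gupCot {u : ℝ} (hu : sin u ≠ 0) :
    HasDerivAt gupCot (-(1 + gupCot u ^ 2)) u := by
  refine ((hasDerivAt_cos u).div (hasDerivAt_sin u) hu).congr_deriv ?_
  rw [gupCot]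
  field_simp
  ring

theorem tan_mul_one_div_cos_sq_arctan (y : ℝ) :
    tan (arctan y) * (1 / cos (arctan y)) ^ 2 = y * (1 + y ^ 2) := by
  rw [tan_arctan, cos_arctan, one_div_one_div, sq_sqrt (by positivity)]

section

variable {c : ℝ → ℝ} {c' t k : ℝ}

theorem HasDerivAt.sqrt_one_add_mul_sq (hk : 0 ≤ k) (hc : HasDerivAt c c' t) :
    HasDerivAt (fun τ => √(1 + k * c τ ^ 2)) (k * c t * c' / √(1 + k * c t ^ 2)) t := by
  have hD : 0 < 1 + k * c t ^ 2 := by positivity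
  refine (((hc.fun_pow 2).const_mul k).const_add 1 |>.sqrt hD.ne').congr_deriv ?_
  field_simp
  ring

theorem HasDerivAt.neg_mul_div_sqrt_one_add_mul_sq (b : ℝ) (hk : 0 ≤ k)
    (hc : HasDerivAt c c' t) :
    HasDerivAt (fun τ => -(b * c τ) / √(1 + k * c τ ^ 2))
      (-(b * c') / √(1 + k * c t ^ 2) ^ 3) t := by
  have hD : 0 < 1 + k * c t ^ 2 := by positivity
  have hd : 0 < √(1 + k * c t ^ 2) := sqrt_pos.mpr hD
  refine ((hc.const_mul b).fun_neg.fun_div (hc.sqrt_one_add_mul_sq hk) hd.ne').congr_deriv ?_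
  field_simp
  rw [sq_sqrt hD.le]
  ring

theorem HasDerivAt.arctan_div_sqrt_one_add_mul_sq (e : ℝ) (hk : 0 ≤ k)
    (hc : HasDerivAt c c' t) :
    HasDerivAt (fun τ => Real.arctan (e / √(1 + k * c τ ^ 2)))
      (-(e * k * c t * c') / (√(1 + k * c t ^ 2) * (1 + k * c t ^ 2 + e ^ 2))) t := by
  have hD : 0 < 1 + k * c t ^ 2 := by positivity
  have hd : 0 < √(1 + k * c t ^ 2) := sqrt_pos.mpr hD
  refine ((hasDerivAt_const t e).fun_div (hc.sqrt_one_add_mul_sq hk) hd.ne').arctan.congr_deriv ?_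
  rw [div_pow, sq_sqrt hD.le]
  field_simp
  ring

end

theorem gup_hamilton_equations_of_riccati {β m ω a η K t : ℝ} {c : ℝ → ℝ} (hβ : 0 < β)
    (hm : m ≠ 0) (hη : η = √β * m * ω * a) (hK : K ^ 2 = 1 + η ^ 2)
    (hc : HasDerivAt c (-(1 + c t ^ 2) * (K * ω)) t) :
    let p : ℝ → ℝ := fun τ => 1 / √β * arctan (η / √(1 + (1 + η ^ 2) * c τ ^ 2))
    let x : ℝ → ℝ := fun τ => -(a * K * c τ) / √(1 + (1 + η ^ 2) * c τ ^ 2)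
    HasDerivAt x (tan (√β * p t) * (1 / cos (√β * p t)) ^ 2 / (√β * m)) t ∧
      HasDerivAt p (-(m * ω ^ 2 * x t)) t := by
  intro p x
  have hk : (0 : ℝ) ≤ 1 + η ^ 2 := by positivity
  have hD : 0 < 1 + (1 + η ^ 2) * c t ^ 2 := by positivity
  have hd : 0 < √(1 + (1 + η ^ 2) * c t ^ 2) := sqrt_pos.mpr hD
  have hβ' : √β ≠ 0 := (sqrt_pos.mpr hβ).ne'
  have hpt : √β * p t = arctan (η / √(1 + (1 + η ^ 2) * c t ^ 2)) := by
    simp only [p]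
    field_simp
  subst hη
  constructor
  · refine (hc.neg_mul_div_sqrt_one_add_mul_sq (a * K) hk).congr_deriv ?_
    rw [hpt, tan_mul_one_div_cos_sq_arctan]
    have hd2 := sq_sqrt hD.le
    generalize √(1 + (1 + (√β * m * ω * a) ^ 2) * c t ^ 2) = d at hd hd2 ⊢
    field_simp
    linear_combination a * ω * (1 + c t ^ 2) * hK - a * ω * hd2
  · refine ((hc.arctan_div_sqrt_one_add_mul_sq _ hk).const_mul (1 / √β)).congr_deriv ?_
    simp only [x]
    field_simp
    ring

theorem gup_oscillator_hamilton_equations_general (β m ω a : ℝ) (hβ : 0 < β)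
    (hm : 0 < m) :
    let η := Real.sqrt β * m * ω * a
    let p : ℝ → ℝ := fun t =>
      (1 / Real.sqrt β) * Real.arctan (η /
        Real.sqrt (1 + (1 + η ^ 2) * gupCot (Real.sqrt (1 + η ^ 2) * ω * t) ^ 2))
    let x : ℝ → ℝ := fun t =>
      -(a * Real.sqrt (1 + η ^ 2) * gupCot (Real.sqrt (1 + η ^ 2) * ω * t)) /
        Real.sqrt (1 + (1 + η ^ 2) * gupCot (Real.sqrt (1 + η ^ 2) * ω * t) ^ 2)
    ∀ t : ℝ, Real.sin (Real.sqrt (1 + η ^ 2) * ω * t) ≠ 0 →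
      HasDerivAt x (Real.tan (Real.sqrt β * p t) *
        (1 / Real.cos (Real.sqrt β * p t)) ^ 2 / (Real.sqrt β * m)) t ∧
      HasDerivAt p (-(m * ω ^ 2 * x t)) t := by
  intro η p x t hsin
  have hc := (hasDerivAt_gupCot hsin).comp t (hasDerivAt_const_mul (√(1 + η ^ 2) * ω))
  exact gup_hamilton_equations_of_riccati hβ hm.ne' rfl (sq_sqrt (by positivity)) hc

theorem gup_oscillator_hamilton_equations (β m ω a : ℝ) (hβ : 0 < β)
    (hm : 0 < m) (hω : 0 < ω) :
    let η := Real.sqrt β * m * ω * a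
    let p : ℝ → ℝ := fun t =>
      (1 / Real.sqrt β) * Real.arctan (η /
        Real.sqrt (1 + (1 + η ^ 2) * gupCot (Real.sqrt (1 + η ^ 2) * ω * t) ^ 2))
    let x : ℝ → ℝ := fun t =>
      -(a * Real.sqrt (1 + η ^ 2) * gupCot (Real.sqrt (1 + η ^ 2) * ω * t)) /
        Real.sqrt (1 + (1 + η ^ 2) * gupCot (Real.sqrt (1 + η ^ 2) * ω * t) ^ 2)
    ∀ t : ℝ, Real.sin (Real.sqrt (1 + η ^ 2) * ω * t) ≠ 0 →
      HasDerivAt x (Real.tan (Real.sqrt β * p t) *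
        (1 / Real.cos (Real.sqrt β * p t)) ^ 2 / (Real.sqrt β * m)) t ∧
      HasDerivAt p (-(m * ω ^ 2 * x t)) t :=
  gup_oscillator_hamilton_equations_general β m ω a hβ hm
end

section
/- Along the classical GUP harmonic oscillator trajectory with initial conditions $x(0^+) \to$ turning point $a$ and $p \to 0$, the energy is conserved: for all $t$ with $\sin(\sqrt{1+\eta^2}\,\omega t) \ne 0$, $\frac{\tan^2(\sqrt{\beta} p(t))}{2\beta m} + \frac{1}{2} m\omega^2 x(t)^2 = \frac{1}{2} m \omega^2 a^2$, where $p(t)$ and $x(t)$ are the explicit solutions given in terms of $\eta = \sqrt{\beta} m\omega a$. -/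
/-! With `c` the cotangent of the phase and `D = 1 + (1 + η²) c²`, the kinetic term is
`η² / (2 β m D)` and the potential term is `½ m ω² a² (1 + η²) c² / D`. Since
`η² / (2 β m) = ½ m ω² a²`, both are multiples of `½ m ω² a²` with weights `1 / D` and
`(1 + η²) c² / D`, which add up to `1`. -/

noncomputable def gupCot' (u : ℝ) : ℝ := Real.cos u / Real.sin u

open Real

theorem tan_sq_arctan_div_sqrt (y : ℝ) {D : ℝ} (hD : 0 ≤ D) :
    tan (arctan (y / √D)) ^ 2 = y ^ 2 / D := by
  rw [tan_arctan, div_pow, sq_sqrt hD]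

theorem sq_neg_div_sqrt (y : ℝ) {D : ℝ} (hD : 0 ≤ D) : (-y / √D) ^ 2 = y ^ 2 / D := by
  rw [div_pow, neg_sq, sq_sqrt hD]

theorem sq_sqrt_mul_div_two_mul_mul {β m : ℝ} (hβ : 0 < β) (hm : m ≠ 0) (ω a : ℝ) :
    (√β * m * ω * a) ^ 2 / (2 * β * m) = 1 / 2 * m * ω ^ 2 * a ^ 2 := by
  rw [mul_pow, mul_pow, mul_pow, sq_sqrt hβ.le]
  field_simp

theorem gup_oscillator_energy_conservation_general (β m ω a : ℝ) (hβ : 0 < β)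
    (hm : 0 < m) :
    let η := Real.sqrt β * m * ω * a
    let p : ℝ → ℝ := fun t =>
      (1 / Real.sqrt β) * Real.arctan (η /
        Real.sqrt (1 + (1 + η ^ 2) * gupCot' (Real.sqrt (1 + η ^ 2) * ω * t) ^ 2))
    let x : ℝ → ℝ := fun t =>
      -(a * Real.sqrt (1 + η ^ 2) * gupCot' (Real.sqrt (1 + η ^ 2) * ω * t)) /
        Real.sqrt (1 + (1 + η ^ 2) * gupCot' (Real.sqrt (1 + η ^ 2) * ω * t) ^ 2)
    ∀ t : ℝ, Real.sin (Real.sqrt (1 + η ^ 2) * ω * t) ≠ 0 →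
      Real.tan (Real.sqrt β * p t) ^ 2 / (2 * β * m) +
        (1 / 2) * m * ω ^ 2 * x t ^ 2 = (1 / 2) * m * ω ^ 2 * a ^ 2 := by
  intro η p x t _
  set c := gupCot' (√(1 + η ^ 2) * ω * t)
  have hD : 0 < 1 + (1 + η ^ 2) * c ^ 2 := by positivity
  have hp : tan (√β * p t) ^ 2 = η ^ 2 / (1 + (1 + η ^ 2) * c ^ 2) := by
    rw [← tan_sq_arctan_div_sqrt η hD.le, ← mul_assoc, mul_one_div_cancel (sqrt_pos.2 hβ).ne',
      one_mul]
  have hx : x t ^ 2 = a ^ 2 * (1 + η ^ 2) * c ^ 2 / (1 + (1 + η ^ 2) * c ^ 2) := by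
    rw [sq_neg_div_sqrt _ hD.le, mul_pow, mul_pow, sq_sqrt (by positivity)]
  rw [hp, hx, div_right_comm, sq_sqrt_mul_div_two_mul_mul hβ hm.ne']
  field_simp

theorem gup_oscillator_energy_conservation (β m ω a : ℝ) (hβ : 0 < β)
    (hm : 0 < m) (hω : 0 < ω) :
    let η := Real.sqrt β * m * ω * a
    let p : ℝ → ℝ := fun t =>
      (1 / Real.sqrt β) * Real.arctan (η /
        Real.sqrt (1 + (1 + η ^ 2) * gupCot' (Real.sqrt (1 + η ^ 2) * ω * t) ^ 2))
    let x : ℝ → ℝ := fun t =>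
      -(a * Real.sqrt (1 + η ^ 2) * gupCot' (Real.sqrt (1 + η ^ 2) * ω * t)) /
        Real.sqrt (1 + (1 + η ^ 2) * gupCot' (Real.sqrt (1 + η ^ 2) * ω * t) ^ 2)
    ∀ t : ℝ, Real.sin (Real.sqrt (1 + η ^ 2) * ω * t) ≠ 0 →
      Real.tan (Real.sqrt β * p t) ^ 2 / (2 * β * m) +
        (1 / 2) * m * ω ^ 2 * x t ^ 2 = (1 / 2) * m * ω ^ 2 * a ^ 2 :=
  gup_oscillator_energy_conservation_general β m ω a hβ hm
end

section
/- For $\beta, m, \omega > 0$ and $a > 0$, $\int_{-a}^{a} \frac{2}{\sqrt{\beta}} \arctan\left(\sqrt{\beta}\, m\omega \sqrt{a^2 - x^2}\right) dx = 2\pi \frac{\sqrt{1 + \beta m^2 \omega^2 a^2} - 1}{\beta m \omega}$. -/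
/-!
Substituting `x = a t` reduces the integral to `∫_{-1}^{1} arctan (k √(1 - t²)) dt` with
`k = √β m ω a`. Integrating by parts against `t` leaves `k t² / (√(1 - t²) (1 + k² (1 - t²)))`,
which splits into partial fractions
`((1 + k²) / (√(1 - t²) (1 + k² (1 - t²))) - 1 / √(1 - t²)) / k`; both pieces have
arcsine primitives, so the integral is read off from `arcsin (±1) = ±π/2` at the endpoints.
-/

open Real Set intervalIntegral

lemma integral_comp_sqrt_sq_sub_sq {E : Type*} [NormedAddCommGroup E] [NormedSpace ℝ E]
    (f : ℝ → E) {a : ℝ} (ha : 0 ≤ a) :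
    ∫ x in (-a)..a, f √(a ^ 2 - x ^ 2) = a • ∫ t in (-1)..1, f (a * √(1 - t ^ 2)) := by
  have h : ∀ t, a * √(1 - t ^ 2) = √(a ^ 2 - (a * t) ^ 2) := fun t => by
    rw [show a ^ 2 - (a * t) ^ 2 = a ^ 2 * (1 - t ^ 2) by ring, sqrt_mul (sq_nonneg a),
      sqrt_sq ha]
  simp_rw [h]
  rw [smul_integral_comp_mul_left (fun x => f √(a ^ 2 - x ^ 2)), mul_neg, mul_one]

lemma hasDerivAt_arcsin_div_sqrt (k : ℝ) {t : ℝ} (ht : t ∈ Ioo (-1) 1) :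
    HasDerivAt (fun t => arcsin (t / √(1 + k ^ 2 * (1 - t ^ 2))))
      (√(1 + k ^ 2) / (√(1 - t ^ 2) * (1 + k ^ 2 * (1 - t ^ 2)))) t := by
  have ht2 : 0 < 1 - t ^ 2 := by nlinarith [ht.1, ht.2]
  have hq : 0 < 1 + k ^ 2 * (1 - t ^ 2) := by positivity
  have hr : 0 < √(1 + k ^ 2 * (1 - t ^ 2)) := sqrt_pos.mpr hq
  have hb := sq_sqrt (show 0 ≤ 1 + k ^ 2 by positivity)
  have hu := sq_sqrt ht2.le
  have hrq := sq_sqrt hq.le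
  have hq' : HasDerivAt (fun t => 1 + k ^ 2 * (1 - t ^ 2)) (-(2 * k ^ 2 * t)) t := by
    refine ((((hasDerivAt_pow 2 t).const_sub 1).const_mul (k ^ 2)).const_add 1).congr_deriv ?_
    push_cast; ring
  have hg := (hasDerivAt_id' t).div (hq'.sqrt hq.ne') hr.ne'
  have hg_sq : 1 - (t / √(1 + k ^ 2 * (1 - t ^ 2))) ^ 2
      = (√(1 + k ^ 2) * √(1 - t ^ 2) / √(1 + k ^ 2 * (1 - t ^ 2))) ^ 2 := by
    rw [div_pow, div_pow, mul_pow, hrq, hu, hb]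
    field_simp
    ring
  have hg_lt_one : (t / √(1 + k ^ 2 * (1 - t ^ 2))) ^ 2 < 1 := by
    rw [div_pow, hrq, div_lt_one hq]; nlinarith
  obtain ⟨hg_lo, hg_hi⟩ := abs_lt.mp ((sq_lt_one_iff_abs_lt_one _).mp hg_lt_one)
  refine ((hasDerivAt_arcsin hg_lo.ne' hg_hi.ne).comp t hg).congr_deriv ?_
  rw [hg_sq, sqrt_sq (by positivity)]
  have hu0 : 0 < √(1 - t ^ 2) := sqrt_pos.mpr ht2
  have hb0 : 0 < √(1 + k ^ 2) := sqrt_pos.mpr (by positivity)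
  generalize √(1 + k ^ 2 * (1 - t ^ 2)) = r at hr hrq ⊢
  generalize √(1 + k ^ 2) = b at hb hb0 ⊢
  generalize √(1 - t ^ 2) = u at hu hu0 ⊢
  field_simp
  linear_combination (1 + k ^ 2 * (1 - t ^ 2) - b ^ 2) * hrq - (1 + k ^ 2 * (1 - t ^ 2)) * hb

lemma hasDerivAt_arctan_mul_sqrt_one_sub_sq (k : ℝ) {t : ℝ} (ht : t ∈ Ioo (-1) 1) :
    HasDerivAt (fun t => arctan (k * √(1 - t ^ 2)))
      (-(k * t) / (√(1 - t ^ 2) * (1 + k ^ 2 * (1 - t ^ 2)))) t := by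
  have ht2 : 0 < 1 - t ^ 2 := by nlinarith [ht.1, ht.2]
  have hu : HasDerivAt (fun t => 1 - t ^ 2) (-(2 * t)) t := by
    refine ((hasDerivAt_pow 2 t).const_sub 1).congr_deriv ?_
    push_cast; ring
  refine (((hu.sqrt ht2.ne').const_mul k).arctan).congr_deriv ?_
  rw [mul_pow, sq_sqrt ht2.le]
  field_simp

/-- `arcsin (t / √(1 + k² (1 - t²)))` equals `arctan (t / (√(1 + k²) √(1 - t²)))` on `(-1, 1)`,
but unlike the latter it stays continuous at `t = ±1`. -/
noncomputable def arctanSqrtPrimitive (k t : ℝ) : ℝ :=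
  t * arctan (k * √(1 - t ^ 2)) +
    (√(1 + k ^ 2) * arcsin (t / √(1 + k ^ 2 * (1 - t ^ 2))) - arcsin t) / k

lemma hasDerivAt_arctanSqrtPrimitive {k t : ℝ} (hk : k ≠ 0) (ht : t ∈ Ioo (-1) 1) :
    HasDerivAt (arctanSqrtPrimitive k) (arctan (k * √(1 - t ^ 2))) t := by
  have ht2 : 0 < 1 - t ^ 2 := by nlinarith [ht.1, ht.2]
  have h := ((hasDerivAt_id' t).mul (hasDerivAt_arctan_mul_sqrt_one_sub_sq k ht)).add
    ((((hasDerivAt_arcsin_div_sqrt k ht).const_mul √(1 + k ^ 2)).sub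
      (hasDerivAt_arcsin (by linarith [ht.1]) (by linarith [ht.2]))).div_const k)
  refine h.congr_deriv ?_
  have hb := sq_sqrt (show 0 ≤ 1 + k ^ 2 by positivity)
  field_simp
  linear_combination hb

lemma continuousOn_arctanSqrtPrimitive (k : ℝ) :
    ContinuousOn (arctanSqrtPrimitive k) (Icc (-1) 1) := by
  have h : ∀ t ∈ Icc (-1 : ℝ) 1, √(1 + k ^ 2 * (1 - t ^ 2)) ≠ 0 := fun t ht => by
    have : 0 ≤ 1 - t ^ 2 := by nlinarith [ht.1, ht.2]
    positivity
  unfold arctanSqrtPrimitive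
  fun_prop (disch := assumption)

lemma integral_arctan_mul_sqrt_one_sub_sq {k : ℝ} (hk : k ≠ 0) :
    ∫ t in (-1)..1, arctan (k * √(1 - t ^ 2)) = π * (√(1 + k ^ 2) - 1) / k := by
  rw [integral_eq_sub_of_hasDerivAt_of_le (by norm_num) (continuousOn_arctanSqrtPrimitive k)
    (fun t ht => hasDerivAt_arctanSqrtPrimitive hk ht)
    ((by fun_prop : Continuous _).intervalIntegrable _ _)]
  simp only [arctanSqrtPrimitive, one_pow, sub_self, sqrt_zero, mul_zero, arctan_zero, add_zero,
    sqrt_one, div_one, arcsin_one, zero_add, even_two, Even.neg_pow, arcsin_neg, mul_neg,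
    sub_neg_eq_add]
  ring

theorem gup_oscillator_action_integral (β m ω a : ℝ) (hβ : 0 < β)
    (hm : 0 < m) (hω : 0 < ω) (ha : 0 < a) :
    ∫ x in (-a)..a,
        (2 / Real.sqrt β) * Real.arctan (Real.sqrt β * m * ω * Real.sqrt (a ^ 2 - x ^ 2))
      = 2 * Real.pi * (Real.sqrt (1 + β * m ^ 2 * ω ^ 2 * a ^ 2) - 1) / (β * m * ω) := by
  have hk : √β * m * ω * a ≠ 0 := by positivity
  have hk_sq : (√β * m * ω * a) ^ 2 = β * m ^ 2 * ω ^ 2 * a ^ 2 := by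
    simp only [mul_pow, sq_sqrt hβ.le]
  rw [integral_const_mul,
    integral_comp_sqrt_sq_sub_sq (fun s => arctan (√β * m * ω * s)) ha.le, smul_eq_mul]
  simp only [← mul_assoc]
  rw [integral_arctan_mul_sqrt_one_sub_sq hk, hk_sq]
  field_simp
  rw [sq_sqrt hβ.le]
end

section
/- If the WKB quantization condition $2\pi \frac{\sqrt{1+\beta m^2\omega^2 a_n^2}-1}{\beta m \omega} = (n + \frac{1}{2}) h$ holds with $h = 2\pi\hbar$, then $E_n^{(SC)} := \frac{1}{2} m \omega^2 a_n^2 = -\frac{1}{8}\gamma\hbar\omega + \hbar\omega(n+\frac{1}{2})(1+\gamma/2) + \frac{1}{2}\hbar\omega\gamma n^2$, where $\gamma = \beta m \hbar \omega$. -/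
theorem gup_oscillator_semiclassical_spectrum (β m ω hbar a : ℝ) (n : ℕ)
    (hβ : 0 < β) (hm : 0 < m) (hω : 0 < ω) (hhbar : 0 < hbar) (ha : 0 < a)
    (hWKB : 2 * Real.pi * (Real.sqrt (1 + β * m ^ 2 * ω ^ 2 * a ^ 2) - 1) /
        (β * m * ω) = ((n : ℝ) + 1 / 2) * (2 * Real.pi * hbar)) :
    (1 / 2) * m * ω ^ 2 * a ^ 2 =
      -(1 / 8) * (β * m * hbar * ω) * hbar * ω +
        hbar * ω * ((n : ℝ) + 1 / 2) * (1 + (β * m * hbar * ω) / 2) +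
        (1 / 2) * hbar * ω * (β * m * hbar * ω) * (n : ℝ) ^ 2 := by
  have hπ := Real.pi_pos
  have hx : (0:ℝ) ≤ 1 + β * m ^ 2 * ω ^ 2 * a ^ 2 := by positivity
  have hβmω : β * m * ω ≠ 0 := by positivity
  rw [div_eq_iff hβmω] at hWKB
  have hs : Real.sqrt (1 + β * m ^ 2 * ω ^ 2 * a ^ 2)
      = 1 + β * m * ω * (((n:ℝ) + 1/2) * hbar) := by
    have h2π : (2 * Real.pi) ≠ 0 := by positivity
    apply mul_left_cancel₀ h2π
    nlinarith [hWKB]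
  have hsq := Real.sq_sqrt hx
  rw [hs] at hsq
  have ha2 : a ^ 2 = ((1 + β * m * ω * (((n:ℝ) + 1/2) * hbar)) ^ 2 - 1) / (β * m ^ 2 * ω ^ 2) := by
    field_simp
    linarith [hsq]
  rw [ha2]
  field_simp
  ring
end

section
/- For $\nu > 1$ and a nonnegative integer $k$, the function $\phi(z) = \cos^\nu(z)\, {}_2F_1(-k, \nu+k; \nu+\tfrac12; \cos^2 z)$ (which is a polynomial in $\cos^2 z$ times $\cos^\nu z$) satisfies the differential equation $-\phi''(z) + \nu(\nu-1)\tan^2(z)\,\phi(z) = \epsilon\,\phi(z)$ on $(-\pi/2, \pi/2)$ with $\epsilon = 4k(\nu+k)+\nu$, and $\phi(\pm\pi/2) = 0$. -/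
/-- Terminating hypergeometric polynomial ₂F₁(-k, b; c; x). -/
noncomputable def hyp2F1term (k : ℕ) (b c x : ℝ) : ℝ :=
  ∑ j ∈ Finset.range (k + 1),
    ((ascPochhammer ℝ j).eval (-(k : ℝ)) * (ascPochhammer ℝ j).eval b /
      ((ascPochhammer ℝ j).eval c * (Nat.factorial j))) * x ^ j

/-! With `u = cos² z`, the substitution `φ = cos^ν z · F(u)` turns `-φ'' + ν(ν-1) tan² z · φ` into
`cos^ν z · (ν F - 4 [u(1-u) F'' + (ν + 1/2 - (ν+1) u) F'])`. For `F = ₂F₁(-k, ν+k; ν+1/2; u)` the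
bracket equals `-k(ν+k) F` by Gauss's hypergeometric equation, which the polynomial satisfies
because its coefficients obey `(j+1)(c+j) a_{j+1} = (j-k)(b+j) a_j`. As `ν ≠ 0`, `φ` vanishes
where `cos` does. -/

open Polynomial Real

section Hypergeometric

variable (k : ℕ) (b c : ℝ)

noncomputable def hyp2F1Coeff (j : ℕ) : ℝ :=
  (ascPochhammer ℝ j).eval (-(k : ℝ)) * (ascPochhammer ℝ j).eval b /
    ((ascPochhammer ℝ j).eval c * j.factorial)

noncomputable def hyp2F1Poly : ℝ[X] :=
  ∑ j ∈ Finset.range (k + 1), C (hyp2F1Coeff k b c j) * X ^ j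

theorem hyp2F1Coeff_eq_zero_of_lt {j : ℕ} (h : k < j) : hyp2F1Coeff k b c j = 0 := by
  simp [hyp2F1Coeff, ascPochhammer_eval_neg_coe_nat_of_lt h]

variable {c} in
theorem hyp2F1Coeff_succ_mul (hc : ∀ n : ℕ, c + n ≠ 0) (j : ℕ) :
    hyp2F1Coeff k b c (j + 1) * ((j + 1) * (c + j)) =
      hyp2F1Coeff k b c j * ((j - k) * (b + j)) := by
  have hpoch : (ascPochhammer ℝ j).eval c ≠ 0 := by
    simp only [ne_eq, ascPochhammer_eval_eq_zero_iff, not_exists, not_and]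
    intro n _ hn
    exact hc n (by linarith)
  have hcj := hc j
  unfold hyp2F1Coeff
  rw [ascPochhammer_succ_eval, ascPochhammer_succ_eval, ascPochhammer_succ_eval,
    Nat.factorial_succ]
  push_cast
  field_simp
  ring

theorem coeff_hyp2F1Poly (n : ℕ) : (hyp2F1Poly k b c).coeff n = hyp2F1Coeff k b c n := by
  simp only [hyp2F1Poly, finsetSum_coeff, coeff_C_mul_X_pow]
  rw [Finset.sum_ite_eq]
  split_ifs with h
  · rfl
  · exact (hyp2F1Coeff_eq_zero_of_lt k b c (by simpa using h)).symm

theorem eval_hyp2F1Poly (x : ℝ) : (hyp2F1Poly k b c).eval x = hyp2F1term k b c x := by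
  simp [hyp2F1Poly, eval_finsetSum, hyp2F1term, hyp2F1Coeff]

variable {c} in
/-- Gauss's equation `x(1-x)F'' + (c - (a+b+1)x)F' - abF = 0` at `a = -k`. -/
theorem hyp2F1Poly_ode (hc : ∀ n : ℕ, c + n ≠ 0) :
    (X - X ^ 2) * derivative (derivative (hyp2F1Poly k b c)) +
      (C c - C (b - k + 1) * X) * derivative (hyp2F1Poly k b c) +
      C (k * b) * hyp2F1Poly k b c = 0 := by
  ext n
  rcases n with _ | _ | n <;>
  simp only [sub_mul, add_mul, pow_two, mul_assoc, coeff_add, coeff_sub, coeff_C_mul,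
    coeff_X_mul, coeff_X_mul_zero, coeff_derivative, coeff_hyp2F1Poly, coeff_zero] <;>
  push_cast
  · linear_combination hyp2F1Coeff_succ_mul k b hc 0
  · linear_combination hyp2F1Coeff_succ_mul k b hc 1
  · have h := hyp2F1Coeff_succ_mul k b hc (n + 2)
    push_cast at h
    linear_combination h

end Hypergeometric

section CosSubstitution

variable {F F' F'' : ℝ → ℝ} {z : ℝ}

theorem hasDerivAt_cos_rpow_mul_comp_cos_sq (μ : ℝ) {d : ℝ} (hF : HasDerivAt F d (cos z ^ 2))
    (hz : 0 < cos z) :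
    HasDerivAt (fun z => cos z ^ μ * F (cos z ^ 2))
      (-sin z * cos z ^ (μ - 1) * (μ * F (cos z ^ 2) + 2 * cos z ^ 2 * d)) z := by
  have hpow : HasDerivAt (fun z => cos z ^ μ) (-sin z * μ * cos z ^ (μ - 1)) z :=
    (hasDerivAt_cos z).rpow_const (Or.inl hz.ne')
  have hsq : HasDerivAt (fun z => cos z ^ 2) (2 * cos z * -sin z) z := by
    simpa using (hasDerivAt_cos z).fun_pow 2
  refine (hpow.mul (hF.comp z hsq)).congr_deriv ?_
  rw [rpow_sub_one hz.ne', Function.comp_apply]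
  field_simp
  ring

theorem iteratedDeriv_two_cos_rpow_mul_comp_cos_sq (ν : ℝ) (hF : ∀ u, HasDerivAt F (F' u) u)
    (hF' : ∀ u, HasDerivAt F' (F'' u) u) (hz : 0 < cos z) :
    iteratedDeriv 2 (fun z => cos z ^ ν * F (cos z ^ 2)) z =
      cos z ^ (ν - 2) *
        ((-cos z ^ 2 + (ν - 1) * sin z ^ 2) * (ν * F (cos z ^ 2) + 2 * cos z ^ 2 * F' (cos z ^ 2)) +
          2 * sin z ^ 2 * cos z ^ 2 *
            ((ν + 2) * F' (cos z ^ 2) + 2 * cos z ^ 2 * F'' (cos z ^ 2))) := by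
  set G : ℝ → ℝ := fun u => ν * F u + 2 * u * F' u
  have hG : ∀ u, HasDerivAt G ((ν + 2) * F' u + 2 * u * F'' u) u := fun u =>
    (((hF u).const_mul ν).fun_add (((hasDerivAt_id' u).const_mul 2).fun_mul (hF' u))).congr_deriv
      (by ring)
  have hderiv : deriv (fun z => cos z ^ ν * F (cos z ^ 2)) =ᶠ[nhds z]
      fun z => -sin z * (cos z ^ (ν - 1) * G (cos z ^ 2)) := by
    filter_upwards [continuousAt_const.eventually_lt continuous_cos.continuousAt hz] with w hw
    rw [(hasDerivAt_cos_rpow_mul_comp_cos_sq ν (hF _) hw).deriv]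
    ring
  rw [iteratedDeriv_succ, iteratedDeriv_one, hderiv.deriv_eq]
  refine ((hasDerivAt_sin z).neg.mul
    (hasDerivAt_cos_rpow_mul_comp_cos_sq (ν - 1) (hG _) hz)).deriv.trans ?_
  have hpow : cos z ^ (ν - 1) = cos z ^ (ν - 2) * cos z := by
    rw [← rpow_add_one hz.ne']
    ring_nf
  rw [Pi.neg_apply, hpow, show ν - 1 - 1 = ν - 2 by ring]
  simp only [G]
  ring

noncomputable def poschlTellerOp (ν : ℝ) (φ : ℝ → ℝ) (z : ℝ) : ℝ :=
  -iteratedDeriv 2 φ z + ν * (ν - 1) * tan z ^ 2 * φ z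

theorem poschlTellerOp_cos_rpow_mul_comp_cos_sq (ν : ℝ) (hF : ∀ u, HasDerivAt F (F' u) u)
    (hF' : ∀ u, HasDerivAt F' (F'' u) u) (hz : 0 < cos z) :
    poschlTellerOp ν (fun z => cos z ^ ν * F (cos z ^ 2)) z =
      cos z ^ ν * (ν * F (cos z ^ 2) -
        4 * (cos z ^ 2 * (1 - cos z ^ 2) * F'' (cos z ^ 2) +
          (ν + 1 / 2 - (ν + 1) * cos z ^ 2) * F' (cos z ^ 2))) := by
  have hpow : cos z ^ ν = cos z ^ (ν - 2) * cos z ^ 2 := by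
    rw [← rpow_natCast, ← rpow_add hz]
    norm_num
  rw [poschlTellerOp, iteratedDeriv_two_cos_rpow_mul_comp_cos_sq ν hF hF' hz, tan_eq_sin_div_cos,
    div_pow, hpow, sin_sq]
  field_simp
  ring

end CosSubstitution

theorem gup_oscillator_even_eigenfunctions (ν : ℝ) (hν : 1 < ν) (k : ℕ) :
    let φ : ℝ → ℝ := fun z =>
      Real.cos z ^ ν * hyp2F1term k (ν + k) (ν + 1 / 2) (Real.cos z ^ 2)
    let ε : ℝ := 4 * k * (ν + k) + ν
    (∀ z ∈ Set.Ioo (-(Real.pi / 2)) (Real.pi / 2),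
      -(iteratedDeriv 2 φ z) + ν * (ν - 1) * Real.tan z ^ 2 * φ z = ε * φ z) ∧
    φ (Real.pi / 2) = 0 ∧ φ (-(Real.pi / 2)) = 0 := by
  intro φ ε
  set P := hyp2F1Poly k (ν + k) (ν + 1 / 2)
  have hφ : φ = fun z => cos z ^ ν * P.eval (cos z ^ 2) := by
    simp only [φ, P, eval_hyp2F1Poly]
  have hode : ∀ u, u * (1 - u) * P.derivative.derivative.eval u +
      (ν + 1 / 2 - (ν + 1) * u) * P.derivative.eval u + k * (ν + k) * P.eval u = 0 := by
    intro u
    have := congrArg (eval u) (hyp2F1Poly_ode k (ν + k) (c := ν + 1 / 2) fun n => by positivity)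
    simp only [eval_add, eval_mul, eval_sub, eval_X, eval_pow, eval_C, eval_zero] at this
    linear_combination this
  have hν0 : ν ≠ 0 := by positivity
  refine ⟨fun z hz => ?_, ?_, ?_⟩
  · have hcos := cos_pos_of_mem_Ioo hz
    change poschlTellerOp ν φ z = ε * φ z
    rw [hφ, poschlTellerOp_cos_rpow_mul_comp_cos_sq ν P.hasDerivAt P.derivative.hasDerivAt hcos]
    linear_combination (-4 * cos z ^ ν) * hode (cos z ^ 2)
  · simp [φ, hν0]
  · simp [φ, hν0]
end

section
/- For $b, \beta, m > 0$, $\int_{-\pi/(2\sqrt{\beta})}^{\pi/(2\sqrt{\beta})} \exp\left(-\frac{b}{2\beta m}\tan^2(\sqrt{\beta} p)\right) dp = \frac{\pi}{\sqrt{\beta}}\, e^{b/(2\beta m)}\, \mathrm{erfc}\left(\sqrt{\frac{b}{2\beta m}}\right)$, where $\mathrm{erfc}(x) = \frac{2}{\sqrt{\pi}}\int_x^\infty e^{-t^2} dt$. -/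
noncomputable def erfc' (x : ℝ) : ℝ :=
  2 / Real.sqrt Real.pi * ∫ t in Set.Ioi x, Real.exp (-t ^ 2)

/-!
Substituting `t = tan (√β p)` turns the integral into `(√β)⁻¹ ∫ e^{-a t²} / (1 + t²) dt` with
`a = b / (2 β m)`. Writing `1 / (1 + t²) = ∫₀^∞ e^{-(1 + t²) s} ds` and swapping the integrals, the
Gaussian integral in `t` leaves `√π ∫₀^∞ e^{-s} / √(a + s) ds`, and the substitution `u = √(a + s)`
turns this into `2 √π e^a ∫_{√a}^∞ e^{-u²} du = π e^a erfc (√a)`.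
-/

open MeasureTheory Set Real

section ChangeOfVariables

variable {E : Type*} [NormedAddCommGroup E] [NormedSpace ℝ E]

lemma integral_Ioo_comp_mul_left (g : ℝ → E) {c : ℝ} (hc : 0 < c) (x y : ℝ) :
    ∫ p in Ioo x y, g (c * p) = c⁻¹ • ∫ u in Ioo (c * x) (c * y), g u := by
  rw [← image_mul_left_Ioo hc, integral_image_eq_integral_abs_deriv_smul measurableSet_Ioo
    (fun p _ => ((hasDerivAt_id' p).const_mul c).hasDerivWithinAt)
    (mul_right_injective₀ hc.ne').injOn, integral_smul, smul_smul]
  simp [abs_of_pos hc, hc.ne']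

lemma integral_Ioo_comp_tan (f : ℝ → E) :
    ∫ u in Ioo (-(π / 2)) (π / 2), f (tan u) = ∫ t, (1 + t ^ 2)⁻¹ • f t := by
  rw [← range_arctan, ← image_univ, integral_image_eq_integral_abs_deriv_smul MeasurableSet.univ
    (fun t _ => (hasDerivAt_arctan t).hasDerivWithinAt) arctan_injective.injOn, setIntegral_univ]
  congr 1 with t
  rw [tan_arctan, abs_of_pos (by positivity), one_div]

end ChangeOfVariables

lemma integral_exp_neg_mul_Ioi_zero {c : ℝ} (hc : 0 < c) :
    ∫ s in Ioi 0, exp (-c * s) = c⁻¹ := by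
  rw [integral_exp_mul_Ioi (neg_neg_iff_pos.2 hc)]
  simp

lemma image_sqrt_add_Ioi_zero {a : ℝ} (ha : 0 ≤ a) :
    (fun s => √(a + s)) '' Ioi 0 = Ioi √a := by
  ext u
  simp only [mem_image, mem_Ioi]
  constructor
  · rintro ⟨s, hs, rfl⟩
    exact sqrt_lt_sqrt ha (by linarith)
  · intro hu
    have hu0 : 0 ≤ u := (sqrt_nonneg a).trans hu.le
    refine ⟨u ^ 2 - a, ?_, by rw [add_sub_cancel, sqrt_sq hu0]⟩
    have := lt_sq_of_sqrt_lt hu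
    linarith

variable {a : ℝ}

lemma integrable_exp_neg_mul_sq_mul_exp_neg_mul (ha : 0 ≤ a) :
    Integrable (Function.uncurry fun t s => exp (-a * t ^ 2) * exp (-(1 + t ^ 2) * s))
      (volume.prod (volume.restrict (Ioi 0))) := by
  have hmeas : AEStronglyMeasurable
      (Function.uncurry fun t s : ℝ => exp (-a * t ^ 2) * exp (-(1 + t ^ 2) * s))
      (volume.prod (volume.restrict (Ioi 0))) :=
    Continuous.aestronglyMeasurable (by fun_prop)
  have hsection (t : ℝ) :
      ∫ s in Ioi 0, ‖exp (-a * t ^ 2) * exp (-(1 + t ^ 2) * s)‖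
        = exp (-a * t ^ 2) * (1 + t ^ 2)⁻¹ := by
    simp_rw [norm_mul, norm_eq_abs, abs_exp]
    rw [integral_const_mul, integral_exp_neg_mul_Ioi_zero (by positivity)]
  rw [integrable_prod_iff hmeas]
  simp only [Function.uncurry_apply_pair, hsection]
  refine ⟨.of_forall fun t => ?_, ?_⟩
  · exact (exp_neg_integrableOn_Ioi 0 (b := 1 + t ^ 2) (by positivity)).const_mul _
  refine integrable_inv_one_add_sq.mono' (by fun_prop) (.of_forall fun t => ?_)
  rw [norm_of_nonneg (by positivity)]
  exact mul_le_of_le_one_left (by positivity) (exp_le_one_iff.2 (by nlinarith [sq_nonneg t]))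

lemma integral_exp_neg_mul_sq_div_one_add_sq_eq_integral_Ioi (ha : 0 ≤ a) :
    ∫ t, exp (-a * t ^ 2) / (1 + t ^ 2) = √π * ∫ s in Ioi 0, exp (-s) / √(a + s) := by
  calc ∫ t, exp (-a * t ^ 2) / (1 + t ^ 2)
      = ∫ t, ∫ s in Ioi 0, exp (-a * t ^ 2) * exp (-(1 + t ^ 2) * s) := by
        congr 1 with t
        rw [integral_const_mul, integral_exp_neg_mul_Ioi_zero (by positivity), div_eq_mul_inv]
    _ = ∫ s in Ioi 0, ∫ t, exp (-s) * exp (-(a + s) * t ^ 2) := by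
        rw [integral_integral_swap (integrable_exp_neg_mul_sq_mul_exp_neg_mul ha)]
        congr 1 with s
        congr 1 with t
        rw [← exp_add, ← exp_add]
        ring_nf
    _ = √π * ∫ s in Ioi 0, exp (-s) / √(a + s) := by
        rw [← integral_const_mul]
        refine setIntegral_congr_fun measurableSet_Ioi fun s _ => ?_
        rw [integral_const_mul, integral_gaussian, sqrt_div pi_nonneg]
        ring

lemma integral_Ioi_exp_neg_div_sqrt_add (ha : 0 ≤ a) :
    ∫ s in Ioi 0, exp (-s) / √(a + s) = 2 * exp a * ∫ u in Ioi √a, exp (-u ^ 2) := by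
  have hderiv (s : ℝ) (hs : s ∈ Ioi 0) :
      HasDerivWithinAt (fun s => √(a + s)) (1 / (2 * √(a + s))) (Ioi 0) s := by
    have : a + s ≠ 0 := by rw [mem_Ioi] at hs; positivity
    exact ((hasDerivAt_sqrt this).comp s ((hasDerivAt_id' s).const_add a)).hasDerivWithinAt
      |>.congr_deriv (mul_one _)
  have hinj : InjOn (fun s => √(a + s)) (Ioi 0) := fun s₁ hs₁ s₂ hs₂ h => by
    rw [mem_Ioi] at hs₁ hs₂
    simpa using (sqrt_inj (by positivity) (by positivity)).1 h
  rw [← image_sqrt_add_Ioi_zero ha, integral_image_eq_integral_abs_deriv_smul measurableSet_Ioi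
    hderiv hinj, ← integral_const_mul]
  refine setIntegral_congr_fun measurableSet_Ioi fun s hs => ?_
  rw [mem_Ioi] at hs
  have hpos : 0 < √(a + s) := sqrt_pos.2 (by positivity)
  rw [smul_eq_mul, abs_of_pos (by positivity), sq_sqrt (by positivity), neg_add, exp_add]
  field_simp
  rw [← exp_add]; simp

lemma integral_exp_neg_mul_sq_div_one_add_sq (ha : 0 ≤ a) :
    ∫ t, exp (-a * t ^ 2) / (1 + t ^ 2) = π * exp a * erfc' √a := by
  rw [integral_exp_neg_mul_sq_div_one_add_sq_eq_integral_Ioi ha,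
    integral_Ioi_exp_neg_div_sqrt_add ha, erfc']
  have hpi : 0 < √π := sqrt_pos.2 pi_pos
  field_simp
  rw [sq_sqrt pi_nonneg]
  ring

theorem gup_classical_partition_integral (b β m : ℝ) (hb : 0 < b)
    (hβ : 0 < β) (hm : 0 < m) :
    ∫ p in Set.Ioo (-(Real.pi / (2 * Real.sqrt β))) (Real.pi / (2 * Real.sqrt β)),
        Real.exp (-(b / (2 * β * m)) * Real.tan (Real.sqrt β * p) ^ 2)
      = (Real.pi / Real.sqrt β) * Real.exp (b / (2 * β * m)) *
          erfc' (Real.sqrt (b / (2 * β * m))) := by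
  set a := b / (2 * β * m)
  have hsqrtβ : 0 < √β := sqrt_pos.2 hβ
  have hπ : √β * (π / (2 * √β)) = π / 2 := by field_simp
  calc _ = (√β)⁻¹ * ∫ u in Ioo (-(π / 2)) (π / 2), exp (-a * tan u ^ 2) := by
        rw [integral_Ioo_comp_mul_left (fun u => exp (-a * tan u ^ 2)) hsqrtβ, mul_neg, hπ,
          smul_eq_mul]
    _ = (√β)⁻¹ * ∫ t, exp (-a * t ^ 2) / (1 + t ^ 2) := by
        simp only [integral_Ioo_comp_tan (fun t => exp (-a * t ^ 2)), smul_eq_mul, inv_mul_eq_div]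
    _ = _ := by
        rw [integral_exp_neg_mul_sq_div_one_add_sq (by positivity)]
        ring
end

section
/- For the infinite well in the GUP framework, the GUP correction to the energy, $E_n - \varepsilon_n \approx \frac{4}{3}\beta m \varepsilon_n^2 = \frac{n^4\pi^4\hbar^2}{mL^2}\cdot\frac{1}{3}\left(\frac{\hbar\sqrt{\beta}}{L}\right)^2$, is of second order in $\delta = \hbar\sqrt{\beta}/L$, whereas the energy uncertainty from wall-position uncertainty, $\Delta E_n = |d\varepsilon_n/dL|\,\hbar\sqrt{\beta} = \frac{n^2\pi^2\hbar^2}{mL^2}\delta$, is of first order in $\delta$; hence for fixed $n$, $\lim_{\delta \to 0^+} \frac{E_n - \varepsilon_n}{\Delta E_n} = 0$. -/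
open Filter Topology

/-!
Writing `a = nπ`, the ratio of the GUP correction to the wall uncertainty is
`(a / 2) · (tan² x - x²) / x³` at `x = aδ`. Since `tan x = x + O(x³)`, the numerator is `O(x⁴)`,
so the ratio is `O(δ)`.
-/

namespace Real

lemma tan_le_self_add_pow_three {x : ℝ} (hx₀ : 0 ≤ x) (hx₁ : x ≤ 1) : tan x ≤ x + x ^ 3 := by
  have hcos : 1 - x ^ 2 / 2 ≤ cos x := one_sub_sq_div_two_le_cos
  have hpos : 0 < 1 - x ^ 2 / 2 := by nlinarith
  calc tan x = sin x / cos x := tan_eq_sin_div_cos x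
    _ ≤ x / (1 - x ^ 2 / 2) := div_le_div₀ hx₀ (sin_le hx₀) hpos hcos
    _ ≤ x + x ^ 3 := by
      rw [div_le_iff₀ hpos]
      nlinarith [mul_nonneg (pow_nonneg hx₀ 3) (show 0 ≤ 1 - x ^ 2 by nlinarith)]

lemma sq_le_tan_sq {x : ℝ} (hx₀ : 0 ≤ x) (hx : x < π / 2) : x ^ 2 ≤ tan x ^ 2 :=
  pow_le_pow_left₀ hx₀ (le_tan hx₀ hx) 2

lemma tan_sq_sub_sq_le {x : ℝ} (hx₀ : 0 ≤ x) (hx₁ : x ≤ 1) : tan x ^ 2 - x ^ 2 ≤ 3 * x ^ 4 := by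
  have htan : x ≤ tan x := le_tan hx₀ (by linarith [pi_gt_three])
  have hsq : tan x ^ 2 ≤ (x + x ^ 3) ^ 2 :=
    pow_le_pow_left₀ (hx₀.trans htan) (tan_le_self_add_pow_three hx₀ hx₁) 2
  nlinarith [mul_nonneg (pow_nonneg hx₀ 4) (show 0 ≤ 1 - x ^ 2 by nlinarith)]

lemma tendsto_tan_sq_sub_sq_div_pow_three :
    Tendsto (fun x => (tan x ^ 2 - x ^ 2) / x ^ 3) (𝓝[>] 0) (𝓝 0) := by
  have hIoo : Set.Ioo (0 : ℝ) 1 ∈ 𝓝[>] (0 : ℝ) := Ioo_mem_nhdsGT one_pos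
  have hlin : Tendsto (fun x : ℝ => 3 * x) (𝓝[>] 0) (𝓝 0) := by
    simpa using (tendsto_id.const_mul (3 : ℝ)).mono_left (nhdsWithin_le_nhds (a := (0 : ℝ)))
  refine squeeze_zero' ?_ ?_ hlin
  · filter_upwards [hIoo] with x ⟨hx₀, hx₁⟩
    exact div_nonneg (sub_nonneg.2 (sq_le_tan_sq hx₀.le (by linarith [pi_gt_three])))
      (pow_nonneg hx₀.le 3)
  · filter_upwards [hIoo] with x ⟨hx₀, hx₁⟩
    rw [div_le_iff₀ (pow_pos hx₀ 3)]
    linarith [tan_sq_sub_sq_le hx₀.le hx₁.le]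

end Real

lemma tendsto_const_mul_nhdsGT_zero {a : ℝ} (ha : 0 < a) :
    Tendsto (fun x => a * x) (𝓝[>] 0) (𝓝[>] 0) :=
  tendsto_iff_comap.2 (comap_mulLeft_nhdsGT_zero ha).ge

theorem gup_box_correction_vs_wall_uncertainty (hbar m L : ℝ) (n : ℕ)
    (hhbar : 0 < hbar) (hm : 0 < m) (hL : 0 < L) (hn : 0 < n) :
    let ε : ℝ := (n : ℝ) ^ 2 * Real.pi ^ 2 * hbar ^ 2 / (2 * m * L ^ 2)
    -- with δ = ħ√β/L, i.e. √β = δ L / ħ: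
    let E : ℝ → ℝ := fun δ =>
      Real.tan ((n : ℝ) * Real.pi * δ) ^ 2 / (2 * m * (δ * L / hbar) ^ 2)
    let ΔE : ℝ → ℝ := fun δ => (n : ℝ) ^ 2 * Real.pi ^ 2 * hbar ^ 2 / (m * L ^ 2) * δ
    (∀ δ : ℝ, (4 / 3) * (δ * L / hbar) ^ 2 * m * ε ^ 2 =
        (n : ℝ) ^ 4 * Real.pi ^ 4 * hbar ^ 2 / (m * L ^ 2) * ((1 : ℝ) / 3) * δ ^ 2) ∧
    Filter.Tendsto (fun δ : ℝ => (E δ - ε) / ΔE δ)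
      (nhdsWithin 0 (Set.Ioi 0)) (nhds 0) := by
  intro ε E ΔE
  refine ⟨fun δ => by simp only [ε]; field_simp; ring, ?_⟩
  set a : ℝ := n * Real.pi with ha_def
  have ha : 0 < a := mul_pos (Nat.cast_pos.2 hn) Real.pi_pos
  have hratio : ∀ δ ∈ Set.Ioi (0 : ℝ),
      a / 2 * ((Real.tan (a * δ) ^ 2 - (a * δ) ^ 2) / (a * δ) ^ 3) = (E δ - ε) / ΔE δ := by
    intro δ hδ
    have hδ : δ ≠ 0 := ne_of_gt hδ
    simp only [E, ε, ΔE, ← ha_def]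
    field_simp
    ring
  have hlim := ((Real.tendsto_tan_sq_sub_sq_div_pow_three.comp
    (tendsto_const_mul_nhdsGT_zero ha)).const_mul (a / 2)).congr'
      (eventually_nhdsWithin_of_forall hratio)
  simpa only [mul_zero] using hlim
end
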